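/- arXiv:0910.4719 — 5 statements merged into one kernel-verified Lean document; each statement's English description precedes it below -/
import Mathlib

section
/- Let X ⊆ Σ^ℤ and X̃ ⊆ Σ̃^ℤ be subshifts over finite alphabets, and let φ : X̃ → X be a topological conjugacy such that φ has coding window [-L̃, L̃] and φ⁻¹ has coding window [-L, L]. If x̃ ∈ X̃, x = φ(x̃), and the word x_{[I₋, I₊]} is synchronizing for X (for some I₋ ≤ I₊ in ℤ), then the word x̃_{[I₋ - L̃ - L, I₊ + L̃ + L]} is synchronizing for X̃. -/
/-- The shift on `Σ^ℤ`: `(x_i)_{i∈ℤ} ↦ (x_{i+1})_{i∈ℤ}`. -/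
def shift {A : Type*} (x : ℤ → A) : ℤ → A := fun i => x (i + 1)

/-- The word `x_{[a,b]}` carried by the block of `x` on the interval `[a, b]`. -/
def block {A : Type*} (x : ℤ → A) (a b : ℤ) : List A :=
  (List.range (b + 1 - a).toNat).map fun k => x (a + k)

/-- A word is admissible for `X` if it appears in a point of `X`. -/
def Admissible {A : Type*} (X : Set (ℤ → A)) (w : List A) : Prop :=
  ∃ x ∈ X, ∃ n : ℤ, ∀ (k : ℕ) (h : k < w.length), x (n + k) = w.get ⟨k, h⟩

/-- A word `v` is synchronizing for `X` if it is admissible and whenever `uv` and `vw`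
are admissible, so is `uvw`. -/
def IsSyncWord {A : Type*} (X : Set (ℤ → A)) (v : List A) : Prop :=
  Admissible X v ∧ ∀ u w : List A, Admissible X (u ++ v) → Admissible X (v ++ w) →
    Admissible X (u ++ v ++ w)

/-- A subshift: a nonempty, closed, shift-invariant subset of `Σ^ℤ`. -/
def IsSubshift {A : Type*} [TopologicalSpace A] (X : Set (ℤ → A)) : Prop :=
  X.Nonempty ∧ IsClosed X ∧ shift '' X = X

/-!
Synchronization is a property of points: `block x a b` is synchronizing for a subshift iff any
two points agreeing with `x` on `[a, b]` can be glued along that window inside the subshift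
(`GluesAlong`). Two points of `X̃` agreeing with `x̃` on `[I₋ - L̃ - L, I₊ + L̃ + L]` are sent by
`φ` to points agreeing with `x` on `[I₋ - L, I₊ + L]`; glue these in `X` along `x_{[I₋, I₊]}`.
Since their common part extends `L` beyond the synchronizing window on both sides, the glued
point is still `L`-close to each of them there, so `φ⁻¹` of it agrees with the first point up to
`I₊` and with the second from `I₋` on, which glues them in `X̃`.
-/

open Set

section Block

variable {A : Type*}

/- `block` elaborates with `List.range _` coerced to `List ℤ` through the list monad; this is the
plain `List.map` form used everywhere below. -/
theorem block_eq_map_range (x : ℤ → A) (a b : ℤ) :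
    block x a b = (List.range (b + 1 - a).toNat).map fun k : ℕ => x (a + k) := by
  simp [block, ← List.map_eq_flatMap, Function.comp_def]

theorem block_length (x : ℤ → A) (a b : ℤ) : (block x a b).length = (b + 1 - a).toNat := by
  simp [block_eq_map_range]

theorem block_append (x : ℤ → A) {a b c : ℤ} (hab : a ≤ b + 1) (hbc : b ≤ c) :
    block x a b ++ block x (b + 1) c = block x a c := by
  have hlen : (c + 1 - a).toNat = (b + 1 - a).toNat + (c + 1 - (b + 1)).toNat := by omega
  rw [block_eq_map_range, block_eq_map_range, block_eq_map_range, hlen, List.range_add,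
    List.map_append, List.map_map]
  congr 2
  funext k
  simp only [Function.comp_apply]
  congr 1
  omega

theorem block_eq_block_iff {x y : ℤ → A} {a b : ℤ} :
    block x a b = block y a b ↔ EqOn x y (Icc a b) := by
  rw [block_eq_map_range, block_eq_map_range, List.map_inj_left]
  constructor
  · rintro h i ⟨hai, hib⟩
    have := h (i - a).toNat (List.mem_range.2 (by omega))
    rwa [Int.toNat_of_nonneg (by omega), add_sub_cancel] at this
  · intro h k hk
    exact h ⟨by omega, by have := List.mem_range.1 hk; omega⟩

theorem block_eq_append {x : ℤ → A} {a b c : ℤ} {s t : List A} (h : block x a c = s ++ t)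
    (hab : a ≤ b + 1) (hbc : b ≤ c) (hs : (s.length : ℤ) = b + 1 - a) :
    block x a b = s ∧ block x (b + 1) c = t := by
  rw [← block_append x hab hbc] at h
  exact List.append_inj h (by rw [block_length]; omega)

theorem block_comp_add_const (x : ℤ → A) (t a b : ℤ) :
    block (fun i => x (i + t)) a b = block x (a + t) (b + t) := by
  rw [block_eq_map_range, block_eq_map_range, show b + t + 1 - (a + t) = b + 1 - a by ring]
  congr 1
  funext k
  congr 1
  ring

theorem admissible_iff_exists_block {X : Set (ℤ → A)} {w : List A} :
    Admissible X w ↔ ∃ x ∈ X, ∃ n : ℤ, block x n (n + w.length - 1) = w := by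
  have carries_iff (x : ℤ → A) (n : ℤ) :
      (∀ (k : ℕ) (h : k < w.length), x (n + k) = w.get ⟨k, h⟩) ↔
        block x n (n + w.length - 1) = w := by
    rw [block_eq_map_range, show n + w.length - 1 + 1 - n = w.length by ring, Int.toNat_natCast,
      List.ext_get_iff]
    simp
  simp only [Admissible, carries_iff]

theorem admissible_block {X : Set (ℤ → A)} {x : ℤ → A} (hx : x ∈ X) (a b : ℤ) :
    Admissible X (block x a b) := by
  refine admissible_iff_exists_block.2 ⟨x, hx, a, ?_⟩
  rcases le_or_gt a (b + 1) with hab | hba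
  · rw [block_length, Int.toNat_of_nonneg (by omega)]
    ring_nf
  · have hnil (c : ℤ) (hc : c < a) : block x a c = [] :=
      List.eq_nil_of_length_eq_zero (by rw [block_length]; omega)
    rw [hnil b (by omega), List.length_nil, hnil _ (by omega)]

end Block

theorem eqOn_Icc_union {α : Type*} {f g : ℤ → α} {a b c d : ℤ} (h₁ : EqOn f g (Icc a b))
    (h₂ : EqOn f g (Icc c d)) (hcb : c ≤ b + 1) : EqOn f g (Icc a d) := by
  rintro i ⟨hai, hid⟩
  rcases le_or_gt i b with hib | hbi
  · exact h₁ ⟨hai, hib⟩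
  · exact h₂ ⟨by omega, hid⟩

namespace IsSubshift

variable {A : Type*} [TopologicalSpace A] {X : Set (ℤ → A)}

theorem comp_add_const_mem (hX : IsSubshift X) {x : ℤ → A} (hx : x ∈ X) (t : ℤ) :
    (fun i => x (i + t)) ∈ X := by
  induction t using Int.induction_on with
  | zero => simpa using hx
  | succ n ih =>
    rw [← hX.2.2]
    refine ⟨_, ih, funext fun i => ?_⟩
    simp only [shift]
    ring_nf
  | pred n ih =>
    rw [← hX.2.2] at ih
    obtain ⟨y, hy, hyx⟩ := ih
    convert hy using 1
    funext i
    have := congrFun hyx (i - 1)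
    simp only [shift, sub_add_cancel] at this
    rw [this]
    ring_nf

theorem admissible_iff (hX : IsSubshift X) {w : List A} (n : ℤ) :
    Admissible X w ↔ ∃ x ∈ X, block x n (n + w.length - 1) = w := by
  refine admissible_iff_exists_block.trans ⟨?_, fun ⟨x, hx, hxw⟩ => ⟨x, hx, n, hxw⟩⟩
  rintro ⟨x, hx, m, hxw⟩
  refine ⟨_, hX.comp_add_const_mem hx (m - n), ?_⟩
  rw [block_comp_add_const]
  convert hxw using 2 <;> ring

end IsSubshift

section Gluing

variable {A : Type*}

/-- The point form of `IsSyncWord X (block x a b)`, equivalent to it when `x ∈ X` and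
`a ≤ b + 1`. -/
def GluesAlong (X : Set (ℤ → A)) (x : ℤ → A) (a b : ℤ) : Prop :=
  ∀ y ∈ X, ∀ z ∈ X, EqOn y x (Icc a b) → EqOn z x (Icc a b) → ∀ m n, m ≤ a → b ≤ n →
    ∃ p ∈ X, EqOn p y (Icc m b) ∧ EqOn p z (Icc a n)

variable [TopologicalSpace A] {X : Set (ℤ → A)} {x : ℤ → A} {a b : ℤ}

theorem IsSyncWord.gluesAlong (hX : IsSubshift X) (hab : a ≤ b + 1)
    (hsync : IsSyncWord X (block x a b)) : GluesAlong X x a b := by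
  intro y hy z hz hyx hzx m n hma hbn
  have hv_y : block y a b = block x a b := block_eq_block_iff.2 hyx
  have hv_z : block z a b = block x a b := block_eq_block_iff.2 hzx
  have huv : block y m (a - 1) ++ block x a b = block y m b := by
    simpa only [sub_add_cancel, hv_y] using
      block_append y (b := a - 1) (c := b) (by omega) (by omega)
  have hvw : block x a b ++ block z (b + 1) n = block z a n := by
    rw [← hv_z, block_append z hab hbn]
  obtain ⟨p, hp, hpw⟩ := (hX.admissible_iff m).1 <| hsync.2 _ _
    (huv ▸ admissible_block hy m b) (hvw ▸ admissible_block hz a n)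
  have hlen :
      m + ((block y m (a - 1) ++ block x a b ++ block z (b + 1) n).length : ℤ) - 1 = n := by
    simp only [List.length_append, block_length]
    omega
  rw [hlen] at hpw
  refine ⟨p, hp, ?_, ?_⟩
  · rw [huv] at hpw
    refine block_eq_block_iff.1 (block_eq_append hpw (by omega) hbn ?_).1
    rw [block_length]
    omega
  · rw [List.append_assoc, hvw] at hpw
    have hu : ((block y m (a - 1)).length : ℤ) = a - 1 + 1 - m := by
      rw [block_length]
      omega
    simpa only [sub_add_cancel, block_eq_block_iff] using
      (block_eq_append hpw (by omega) (by omega) hu).2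

theorem isSyncWord_of_gluesAlong (hX : IsSubshift X) (hx : x ∈ X) (hab : a ≤ b + 1)
    (hglue : GluesAlong X x a b) : IsSyncWord X (block x a b) := by
  refine ⟨admissible_block hx a b, fun u w hu hw => ?_⟩
  have hv : ((block x a b).length : ℤ) = b + 1 - a := by
    rw [block_length]
    omega
  obtain ⟨y, hy, hyuv⟩ := (hX.admissible_iff (a - u.length)).1 hu
  obtain ⟨z, hz, hzvw⟩ := (hX.admissible_iff a).1 hw
  rw [List.length_append, show a - u.length + ↑(u.length + (block x a b).length) - 1 = b by
    push_cast; omega] at hyuv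
  rw [List.length_append, show a + ↑((block x a b).length + w.length) - 1 = b + w.length by
    push_cast; omega] at hzvw
  obtain ⟨hyu, hyv⟩ := block_eq_append hyuv (b := a - 1) (by omega) (by omega) (by omega)
  obtain ⟨hzv, hzw⟩ := block_eq_append hzvw (b := b) hab (by omega) hv
  rw [sub_add_cancel] at hyv
  obtain ⟨p, hp, hpy, hpz⟩ := hglue y hy z hz (block_eq_block_iff.1 hyv)
    (block_eq_block_iff.1 hzv) (a - u.length) (b + w.length) (by omega) (by omega)
  have huvw : block p (a - u.length) (b + w.length) = u ++ block x a b ++ w := by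
    rw [← block_append p (b := b) (by omega) (by omega), block_eq_block_iff.2 hpy,
      block_eq_block_iff.2 (hpz.mono (Icc_subset_Icc (by omega) le_rfl)), hzw,
      ← block_append y (b := a - 1) (by omega) (by omega), sub_add_cancel, hyu, hyv]
  exact huvw ▸ admissible_block hp _ _

end Gluing

section CodingWindow

variable {A B : Type*}

def HasCodingWindow (S : Set (ℤ → B)) (F : (ℤ → B) → ℤ → A) (L : ℤ) : Prop :=
  ∀ x ∈ S, ∀ y ∈ S, ∀ i : ℤ, (∀ j : ℤ, i - L ≤ j → j ≤ i + L → x j = y j) → F x i = F y i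

theorem HasCodingWindow.eqOn {S : Set (ℤ → B)} {F : (ℤ → B) → ℤ → A} {L : ℤ}
    (hwin : HasCodingWindow S F L) {x y : ℤ → B} (hx : x ∈ S) (hy : y ∈ S) {a b : ℤ}
    (h : EqOn x y (Icc (a - L) (b + L))) : EqOn (F x) (F y) (Icc a b) :=
  fun i ⟨hai, hib⟩ => hwin x hx y hy i fun j hj₁ hj₂ => h ⟨by omega, by omega⟩

theorem GluesAlong.of_conjugacy {X : Set (ℤ → A)} {Xt : Set (ℤ → B)}
    {F : (ℤ → B) → ℤ → A} {G : (ℤ → A) → ℤ → B} {Lt L I₁ I₂ : ℤ}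
    (hF : ∀ x ∈ Xt, F x ∈ X) (hG : ∀ x ∈ X, G x ∈ Xt) (hGF : ∀ x ∈ Xt, G (F x) = x)
    (hFwin : HasCodingWindow Xt F Lt) (hGwin : HasCodingWindow X G L)
    (hLt : 0 ≤ Lt) (hL : 0 ≤ L) (hI : I₁ ≤ I₂ + 1) {xt : ℤ → B} (hxt : xt ∈ Xt)
    (hglue : GluesAlong X (F xt) I₁ I₂) : GluesAlong Xt xt (I₁ - Lt - L) (I₂ + Lt + L) := by
  intro y hy z hz hyx hzx m n hm hn
  have hyF : EqOn (F y) (F xt) (Icc (I₁ - L) (I₂ + L)) :=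
    hFwin.eqOn hy hxt (hyx.mono (Icc_subset_Icc (by omega) (by omega)))
  have hzF : EqOn (F z) (F xt) (Icc (I₁ - L) (I₂ + L)) :=
    hFwin.eqOn hz hxt (hzx.mono (Icc_subset_Icc (by omega) (by omega)))
  obtain ⟨p, hp, hpy, hpz⟩ := hglue (F y) (hF y hy) (F z) (hF z hz)
    (hyF.mono (Icc_subset_Icc (by omega) (by omega)))
    (hzF.mono (Icc_subset_Icc (by omega) (by omega))) (m - L) (n + L) (by omega) (by omega)
  have hpy' : EqOn p (F y) (Icc (m - L) (I₂ + L)) :=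
    eqOn_Icc_union hpy ((hpz.mono (Icc_subset_Icc le_rfl (by omega))).trans
      ((hzF.trans hyF.symm).mono (Icc_subset_Icc (by omega) le_rfl))) hI
  have hpz' : EqOn p (F z) (Icc (I₁ - L) (n + L)) :=
    eqOn_Icc_union ((hpy.mono (Icc_subset_Icc (by omega) le_rfl)).trans
      ((hyF.trans hzF.symm).mono (Icc_subset_Icc le_rfl (by omega)))) hpz hI
  have hGy : EqOn (G p) y (Icc m I₂) := hGF y hy ▸ hGwin.eqOn hp (hF y hy) hpy'
  have hGz : EqOn (G p) z (Icc I₁ n) := hGF z hz ▸ hGwin.eqOn hp (hF z hz) hpz'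
  have hyz : EqOn y z (Icc (I₁ - Lt - L) (I₂ + Lt + L)) := hyx.trans hzx.symm
  refine ⟨G p, hG p hp, eqOn_Icc_union hGy ?_ hI, eqOn_Icc_union ?_ hGz hI⟩
  · exact (hGz.mono (Icc_subset_Icc le_rfl hn)).trans
      (hyz.symm.mono (Icc_subset_Icc (by omega) le_rfl))
  · exact (hGy.mono (Icc_subset_Icc hm le_rfl)).trans
      (hyz.mono (Icc_subset_Icc le_rfl (by omega)))

end CodingWindow

theorem stmt0_general {A B : Type*}
    [TopologicalSpace A] [TopologicalSpace B]
    (X : Set (ℤ → A)) (Xt : Set (ℤ → B)) (hX : IsSubshift X) (hXt : IsSubshift Xt)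
    (F : (ℤ → B) → (ℤ → A)) (G : (ℤ → A) → (ℤ → B))
    (hF : ∀ x ∈ Xt, F x ∈ X) (hG : ∀ x ∈ X, G x ∈ Xt)
    (hGF : ∀ x ∈ Xt, G (F x) = x)
    (Lt L : ℤ) (hLt : 0 ≤ Lt) (hL : 0 ≤ L)
    (hFwin : ∀ x ∈ Xt, ∀ y ∈ Xt, ∀ i : ℤ,
      (∀ j : ℤ, i - Lt ≤ j → j ≤ i + Lt → x j = y j) → F x i = F y i)
    (hGwin : ∀ x ∈ X, ∀ y ∈ X, ∀ i : ℤ,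
      (∀ j : ℤ, i - L ≤ j → j ≤ i + L → x j = y j) → G x i = G y i)
    (xt : ℤ → B) (hxt : xt ∈ Xt) (I₁ I₂ : ℤ) (hI : I₁ ≤ I₂)
    (hsync : IsSyncWord X (block (F xt) I₁ I₂)) :
    IsSyncWord Xt (block xt (I₁ - Lt - L) (I₂ + Lt + L)) :=
  isSyncWord_of_gluesAlong hXt hxt (by omega) <|
    (hsync.gluesAlong hX (by omega)).of_conjugacy hF hG hGF hFwin hGwin hLt hL (by omega) hxt

/-- Lemma 2.1: if `φ : X̃ → X` is a topological conjugacy with coding window `[-L̃, L̃]`, and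
`φ⁻¹` has coding window `[-L, L]`, `x̃ ∈ X̃`, `x = φ(x̃)`, and `x_{[I₋,I₊]}` is synchronizing
for `X`, then `x̃_{[I₋-L̃-L, I₊+L̃+L]}` is synchronizing for `X̃`. -/
theorem stmt0 {A B : Type*} [Fintype A] [Fintype B]
    [TopologicalSpace A] [DiscreteTopology A] [TopologicalSpace B] [DiscreteTopology B]
    (X : Set (ℤ → A)) (Xt : Set (ℤ → B)) (hX : IsSubshift X) (hXt : IsSubshift Xt)
    (F : (ℤ → B) → (ℤ → A)) (G : (ℤ → A) → (ℤ → B))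
    (hF : ∀ x ∈ Xt, F x ∈ X) (hG : ∀ x ∈ X, G x ∈ Xt)
    (hGF : ∀ x ∈ Xt, G (F x) = x) (hFG : ∀ x ∈ X, F (G x) = x)
    (hshift : ∀ x ∈ Xt, F (shift x) = shift (F x))
    (Lt L : ℤ) (hLt : 0 ≤ Lt) (hL : 0 ≤ L)
    (hFwin : ∀ x ∈ Xt, ∀ y ∈ Xt, ∀ i : ℤ,
      (∀ j : ℤ, i - Lt ≤ j → j ≤ i + Lt → x j = y j) → F x i = F y i)
    (hGwin : ∀ x ∈ X, ∀ y ∈ X, ∀ i : ℤ,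
      (∀ j : ℤ, i - L ≤ j → j ≤ i + L → x j = y j) → G x i = G y i)
    (xt : ℤ → B) (hxt : xt ∈ Xt) (I₁ I₂ : ℤ) (hI : I₁ ≤ I₂)
    (hsync : IsSyncWord X (block (F xt) I₁ I₂)) :
    IsSyncWord Xt (block xt (I₁ - Lt - L) (I₂ + Lt + L)) :=
  stmt0_general X Xt hX hXt F G hF hG hGF Lt L hLt hL hFwin hGwin xt hxt I₁ I₂ hI hsync
end

section
/- For every l ≥ 2, the (2l+4) × (2l+2) integer matrix M^t_{l,l+1} - I^t_{l,l+1}, whose entries are: N in positions (i, l+2) for 1 ≤ i ≤ l+2; 1 in positions (i,i) for 2 ≤ i ≤ 2l+2, i ≠ l+2; 1 in positions (i,j) with i + j = 2l+5 and 1 ≤ j ≤ l+1; -1 in positions (i, i-1) for 2 ≤ i ≤ 2l+2 (i.e., (j+1, j) for 1 ≤ j ≤ 2l+1); and 0 elsewhere, has trivial kernel: the only integer vector v ∈ ℤ^{2l+2} with (M^t_{l,l+1} - I^t_{l,l+1}) v = 0 is v = 0. -/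
/-- The entry in row `i`, column `j` (1-based) of the `(2l+4) × (2l+2)` integer matrix
`M^t_{l,l+1} - I^t_{l,l+1}` of the symbolic matrix system of `sc((𝒞^{(N)}_{reset})^{rev})`. -/
def MmIent (N l : ℕ) (i j : ℕ) : ℤ :=
  if j = l + 2 ∧ 1 ≤ i ∧ i ≤ l + 2 then (N : ℤ)
  else if i = j ∧ 2 ≤ i ∧ i ≤ 2 * l + 2 ∧ i ≠ l + 2 then 1
  else if i + j = 2 * l + 5 ∧ 1 ≤ j ∧ j ≤ l + 1 then 1
  else if i = j + 1 ∧ 2 ≤ i ∧ i ≤ 2 * l + 2 then -1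
  else 0

/-- The matrix `M^t_{l,l+1} - I^t_{l,l+1}`, with explicitly given size `m × n`. -/
def MmI (N l m n : ℕ) : Matrix (Fin m) (Fin n) ℤ :=
  Matrix.of fun i j => MmIent N l (i.1 + 1) (j.1 + 1)

/-- Extension of a vector on `Fin (2l+2)` to `ℕ` (0-based), zero outside. -/
private def Vv (l : ℕ) (v : Fin (2 * l + 2) → ℤ) (k : ℕ) : ℤ :=
  if h : k < 2 * l + 2 then v ⟨k, h⟩ else 0

private lemma Vv_pos (l : ℕ) (v : Fin (2 * l + 2) → ℤ) (k : ℕ) (h : k < 2 * l + 2) :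
    Vv l v k = v ⟨k, h⟩ := dif_pos h

/-- Decomposition of the matrix entry into four disjoint indicator summands. -/
private lemma entsplit (N l i j : ℕ) :
    MmIent N l i j =
      (if j = l + 2 ∧ 1 ≤ i ∧ i ≤ l + 2 then (N : ℤ) else 0) +
      (if i = j ∧ 2 ≤ i ∧ i ≤ 2 * l + 2 ∧ i ≠ l + 2 then 1 else 0) +
      (if i + j = 2 * l + 5 ∧ 1 ≤ j ∧ j ≤ l + 1 then 1 else 0) +
      (if i = j + 1 ∧ 2 ≤ i ∧ i ≤ 2 * l + 2 then -1 else 0) := by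
  unfold MmIent
  split_ifs <;> omega

private lemma sum_if_eq (n : ℕ) (v : Fin n → ℤ) (c : ℤ) (p : ℕ → Prop) [DecidablePred p]
    (j0 : ℕ) (hj0 : j0 < n) (hp : ∀ k, k < n → (p (k + 1) ↔ k = j0)) :
    (∑ j : Fin n, (if p (j.1 + 1) then c else 0) * v j) = c * v ⟨j0, hj0⟩ := by
  rw [Finset.sum_eq_single (⟨j0, hj0⟩ : Fin n)]
  · rw [if_pos ((hp j0 hj0).mpr rfl)]
  · intro j _ hj
    rw [if_neg, zero_mul]
    exact fun hpj => hj (Fin.ext ((hp j.1 j.2).mp hpj))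
  · intro h; exact absurd (Finset.mem_univ _) h

private lemma sum_if_zero (n : ℕ) (v : Fin n → ℤ) (c : ℤ) (p : ℕ → Prop) [DecidablePred p]
    (hp : ∀ k, k < n → ¬ p (k + 1)) :
    (∑ j : Fin n, (if p (j.1 + 1) then c else 0) * v j) = 0 := by
  apply Finset.sum_eq_zero
  intro j _
  rw [if_neg (hp j.1 j.2), zero_mul]

/-- For `l ≥ 2` the matrix `M^t_{l,l+1} - I^t_{l,l+1}` has trivial kernel over `ℤ`. -/
theorem stmt5 (N l : ℕ) (hN : 0 < N) (hl : 2 ≤ l)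
    (v : Fin (2 * l + 2) → ℤ)
    (hv : (MmI N l (2 * l + 4) (2 * l + 2)).mulVec v = 0) :
    v = 0 := by
  -- the row equations
  have key : ∀ i : ℕ, 1 ≤ i → i ≤ 2 * l + 4 →
      (if 1 ≤ i ∧ i ≤ l + 2 then (N : ℤ) * Vv l v (l + 1) else 0)
      + (if 2 ≤ i ∧ i ≤ 2 * l + 2 ∧ i ≠ l + 2 then Vv l v (i - 1) else 0)
      + (if l + 4 ≤ i then Vv l v (2 * l + 4 - i) else 0)
      + (if 2 ≤ i ∧ i ≤ 2 * l + 2 then -Vv l v (i - 2) else 0) = 0 := by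
    intro i hi1 hi2
    have h0 := congrFun hv ⟨i - 1, by omega⟩
    simp only [Matrix.mulVec, dotProduct, MmI, Matrix.of_apply, Pi.zero_apply] at h0
    have hi' : i - 1 + 1 = i := by omega
    rw [hi'] at h0
    have e1 : (∑ j : Fin (2 * l + 2), MmIent N l i (j.1 + 1) * v j)
        = (∑ j : Fin (2 * l + 2),
            (if j.1 + 1 = l + 2 ∧ 1 ≤ i ∧ i ≤ l + 2 then (N : ℤ) else 0) * v j)
        + (∑ j : Fin (2 * l + 2),
            (if i = j.1 + 1 ∧ 2 ≤ i ∧ i ≤ 2 * l + 2 ∧ i ≠ l + 2 then (1 : ℤ) else 0) * v j)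
        + (∑ j : Fin (2 * l + 2),
            (if i + (j.1 + 1) = 2 * l + 5 ∧ 1 ≤ j.1 + 1 ∧ j.1 + 1 ≤ l + 1 then (1 : ℤ) else 0) * v j)
        + (∑ j : Fin (2 * l + 2),
            (if i = (j.1 + 1) + 1 ∧ 2 ≤ i ∧ i ≤ 2 * l + 2 then (-1 : ℤ) else 0) * v j) := by
      rw [← Finset.sum_add_distrib, ← Finset.sum_add_distrib, ← Finset.sum_add_distrib]
      exact Finset.sum_congr rfl fun j _ => by rw [entsplit]; ring
    have eA : (∑ j : Fin (2 * l + 2),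
          (if j.1 + 1 = l + 2 ∧ 1 ≤ i ∧ i ≤ l + 2 then (N : ℤ) else 0) * v j)
        = if 1 ≤ i ∧ i ≤ l + 2 then (N : ℤ) * Vv l v (l + 1) else 0 := by
      by_cases hA : 1 ≤ i ∧ i ≤ l + 2
      · rw [if_pos hA, Vv_pos l v (l + 1) (by omega)]
        exact sum_if_eq (2 * l + 2) v _ (fun m => m = l + 2 ∧ 1 ≤ i ∧ i ≤ l + 2)
          (l + 1) (by omega) (fun k hk => by omega)
      · rw [if_neg hA]
        exact sum_if_zero (2 * l + 2) v _ (fun m => m = l + 2 ∧ 1 ≤ i ∧ i ≤ l + 2)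
          (fun k hk => by omega)
    have eB : (∑ j : Fin (2 * l + 2),
          (if i = j.1 + 1 ∧ 2 ≤ i ∧ i ≤ 2 * l + 2 ∧ i ≠ l + 2 then (1 : ℤ) else 0) * v j)
        = if 2 ≤ i ∧ i ≤ 2 * l + 2 ∧ i ≠ l + 2 then Vv l v (i - 1) else 0 := by
      by_cases hB : 2 ≤ i ∧ i ≤ 2 * l + 2 ∧ i ≠ l + 2
      · rw [if_pos hB, Vv_pos l v (i - 1) (by omega)]
        exact (sum_if_eq (2 * l + 2) v 1 (fun m => i = m ∧ 2 ≤ i ∧ i ≤ 2 * l + 2 ∧ i ≠ l + 2)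
          (i - 1) (by omega) (fun k hk => by omega)).trans (one_mul _)
      · rw [if_neg hB]
        exact sum_if_zero (2 * l + 2) v _ (fun m => i = m ∧ 2 ≤ i ∧ i ≤ 2 * l + 2 ∧ i ≠ l + 2)
          (fun k hk => by omega)
    have eC : (∑ j : Fin (2 * l + 2),
          (if i + (j.1 + 1) = 2 * l + 5 ∧ 1 ≤ j.1 + 1 ∧ j.1 + 1 ≤ l + 1 then (1 : ℤ) else 0) * v j)
        = if l + 4 ≤ i then Vv l v (2 * l + 4 - i) else 0 := by
      by_cases hC : l + 4 ≤ i
      · rw [if_pos hC, Vv_pos l v (2 * l + 4 - i) (by omega)]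
        exact (sum_if_eq (2 * l + 2) v 1 (fun m => i + m = 2 * l + 5 ∧ 1 ≤ m ∧ m ≤ l + 1)
          (2 * l + 4 - i) (by omega) (fun k hk => by omega)).trans (one_mul _)
      · rw [if_neg hC]
        exact sum_if_zero (2 * l + 2) v _ (fun m => i + m = 2 * l + 5 ∧ 1 ≤ m ∧ m ≤ l + 1)
          (fun k hk => by omega)
    have eD : (∑ j : Fin (2 * l + 2),
          (if i = (j.1 + 1) + 1 ∧ 2 ≤ i ∧ i ≤ 2 * l + 2 then (-1 : ℤ) else 0) * v j)
        = if 2 ≤ i ∧ i ≤ 2 * l + 2 then -Vv l v (i - 2) else 0 := by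
      by_cases hD : 2 ≤ i ∧ i ≤ 2 * l + 2
      · rw [if_pos hD, Vv_pos l v (i - 2) (by omega)]
        exact (sum_if_eq (2 * l + 2) v (-1) (fun m => i = m + 1 ∧ 2 ≤ i ∧ i ≤ 2 * l + 2)
          (i - 2) (by omega) (fun k hk => by omega)).trans (neg_one_mul _)
      · rw [if_neg hD]
        exact sum_if_zero (2 * l + 2) v _ (fun m => i = m + 1 ∧ 2 ≤ i ∧ i ≤ 2 * l + 2)
          (fun k hk => by omega)
    rw [e1, eA, eB, eC, eD] at h0
    exact h0
  have hN' : (N : ℤ) ≠ 0 := Int.natCast_ne_zero.mpr hN.ne'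
  -- row 1 : V (l+1) = 0
  have hVl1 : Vv l v (l + 1) = 0 := by
    have h := key 1 (by omega) (by omega)
    rw [if_pos (by omega : 1 ≤ 1 ∧ 1 ≤ l + 2),
        if_neg (by omega : ¬(2 ≤ 1 ∧ 1 ≤ 2 * l + 2 ∧ 1 ≠ l + 2)),
        if_neg (by omega : ¬(l + 4 ≤ 1)),
        if_neg (by omega : ¬(2 ≤ 1 ∧ 1 ≤ 2 * l + 2))] at h
    simp only [add_zero, mul_eq_zero] at h
    exact h.resolve_left hN'
  -- all coordinates vanish, by strong induction
  have hVall : ∀ k, k < 2 * l + 2 → Vv l v k = 0 := by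
    intro k
    induction k using Nat.strong_induction_on with
    | _ k ih =>
      intro hk
      by_cases hk1 : k = l + 1
      · subst hk1; exact hVl1
      by_cases hk0 : k = 0
      · subst hk0
        have h := key (2 * l + 4) (by omega) (by omega)
        rw [if_neg (by omega : ¬(1 ≤ 2 * l + 4 ∧ 2 * l + 4 ≤ l + 2)),
            if_neg (by omega : ¬(2 ≤ 2 * l + 4 ∧ 2 * l + 4 ≤ 2 * l + 2 ∧ 2 * l + 4 ≠ l + 2)),
            if_pos (by omega : l + 4 ≤ 2 * l + 4),
            if_neg (by omega : ¬(2 ≤ 2 * l + 4 ∧ 2 * l + 4 ≤ 2 * l + 2))] at h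
        simpa using h
      by_cases hkl : k ≤ l
      · -- 1 ≤ k ≤ l, row i = k+1
        have h := key (k + 1) (by omega) (by omega)
        rw [if_pos (by omega : 1 ≤ k + 1 ∧ k + 1 ≤ l + 2),
            if_pos (by omega : 2 ≤ k + 1 ∧ k + 1 ≤ 2 * l + 2 ∧ k + 1 ≠ l + 2),
            if_neg (by omega : ¬(l + 4 ≤ k + 1)),
            if_pos (by omega : 2 ≤ k + 1 ∧ k + 1 ≤ 2 * l + 2)] at h
        rw [show k + 1 - 1 = k from by omega, show k + 1 - 2 = k - 1 from by omega,
            hVl1, ih (k - 1) (by omega) (by omega)] at h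
        simpa using h
      by_cases hkl2 : k = l + 2
      · subst hkl2
        have h := key (l + 3) (by omega) (by omega)
        rw [if_neg (by omega : ¬(1 ≤ l + 3 ∧ l + 3 ≤ l + 2)),
            if_pos (by omega : 2 ≤ l + 3 ∧ l + 3 ≤ 2 * l + 2 ∧ l + 3 ≠ l + 2),
            if_neg (by omega : ¬(l + 4 ≤ l + 3)),
            if_pos (by omega : 2 ≤ l + 3 ∧ l + 3 ≤ 2 * l + 2)] at h
        rw [show l + 3 - 1 = l + 2 from by omega, show l + 3 - 2 = l + 1 from by omega,
            hVl1] at h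
        simpa using h
      · -- l + 3 ≤ k ≤ 2l + 1, row i = k+1
        have h := key (k + 1) (by omega) (by omega)
        rw [if_neg (by omega : ¬(1 ≤ k + 1 ∧ k + 1 ≤ l + 2)),
            if_pos (by omega : 2 ≤ k + 1 ∧ k + 1 ≤ 2 * l + 2 ∧ k + 1 ≠ l + 2),
            if_pos (by omega : l + 4 ≤ k + 1),
            if_pos (by omega : 2 ≤ k + 1 ∧ k + 1 ≤ 2 * l + 2)] at h
        rw [show k + 1 - 1 = k from by omega, show k + 1 - 2 = k - 1 from by omega,
            show 2 * l + 4 - (k + 1) = 2 * l + 3 - k from by omega,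
            ih (k - 1) (by omega) (by omega),
            ih (2 * l + 3 - k) (by omega) (by omega)] at h
        simpa using h
  funext j
  have := hVall j.1 j.2
  rwa [Vv_pos l v j.1 j.2] at this
end

section
/- For every l ≥ 2 and z ∈ ℤ^{2l+4}, one has z ∈ B_{l,l+1} ℤ^{2l+2} if and only if z₁ ≡ 0 (mod N), z₂ - z_{2l+3} + z_{2l+4} = 0, and z₃ + z₄ + ⋯ + z_{l+2} + z_{2l+3} = 0. -/
/-- The entry in row `i`, column `j` (1-based) of the `(2l+4) × (2l+2)` integer matrix
`B_{l,l+1}` (for the reversed reset one-counter shift). -/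
def Bent (N l : ℕ) (i j : ℕ) : ℤ :=
  if i = 1 ∧ j = l + 2 then (N : ℤ)
  else if i = j ∧ 2 ≤ i ∧ i ≤ 2 * l + 2 ∧ i ≠ l + 2 then 1
  else if i = 2 * l + 4 ∧ j = 1 then 1
  else if i = 2 * l + 3 ∧ j = 2 then 1
  else if i = j + 1 ∧ 2 ≤ i ∧ i ≤ l + 2 then -1
  else 0

/-- The matrix `B_{l,l+1}`, with explicitly given size `m × n`. -/
def Bmat (N l m n : ℕ) : Matrix (Fin m) (Fin n) ℤ :=
  Matrix.of fun i j => Bent N l (i.1 + 1) (j.1 + 1)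

/-!
Index from 0. The rows of `B x` are `N x_{l+1}`, the differences `x_i - x_{i-1}` for
`1 ≤ i ≤ l`, then `-x_l`, the copies `x_i` for `l+2 ≤ i ≤ 2l+1`, and finally `x_1`, `x_0`.
So on `z = B x` the partial sums `z_{2l+3} + z_1 + ⋯ + z_n` telescope to `x_n` for `n ≤ l`,
and the next one, `z_{2l+3} + z_1 + ⋯ + z_{l+1}`, vanishes; it is exactly the sum of the
left-hand sides of the last two conditions. Conversely, these partial sums, `z_0 / N` and the
copied coordinates define a preimage.
-/

open Finset Matrix

def natExtend {α : Type*} [Zero α] {n : ℕ} (v : Fin n → α) (k : ℕ) : α :=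
  if h : k < n then v ⟨k, h⟩ else 0

lemma natExtend_of_lt {α : Type*} [Zero α] {n k : ℕ} (v : Fin n → α) (h : k < n) :
    natExtend v k = v ⟨k, h⟩ :=
  dif_pos h

lemma mulVec_apply_of_row_eq {α m n : Type*} [Fintype n] [NonUnitalNonAssocSemiring α]
    {M : Matrix m n α} {i : m} {r : n → α} (h : ∀ j, M i j = r j) (x : n → α) :
    (M *ᵥ x) i = r ⬝ᵥ x := by
  rw [mulVec_apply, show M.row i = r from funext h]

local notation "B[" N ", " l "]" => Bmat N l (2 * l + 4) (2 * l + 2)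

namespace Bmat

variable {N l : ℕ} (x : Fin (2 * l + 2) → ℤ)

lemma mulVec_apply_zero : (B[N, l] *ᵥ x) ⟨0, by omega⟩ = N * x ⟨l + 1, by omega⟩ := by
  rw [mulVec_apply_of_row_eq (r := Pi.single ⟨l + 1, by omega⟩ (N : ℤ)), single_dotProduct]
  intro j
  simp only [Bmat, Bent, of_apply, Pi.single_apply, Fin.ext_iff]
  grind

lemma mulVec_apply_add_one_of_lt {i : ℕ} (hi : i < l) :
    (B[N, l] *ᵥ x) ⟨i + 1, by omega⟩ = x ⟨i + 1, by omega⟩ - x ⟨i, by omega⟩ := by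
  rw [mulVec_apply_of_row_eq
      (r := Pi.single ⟨i + 1, by omega⟩ 1 + Pi.single ⟨i, by omega⟩ (-1)),
    add_dotProduct, single_dotProduct, single_dotProduct]
  · ring
  intro j
  simp only [Bmat, Bent, of_apply, Pi.add_apply, Pi.single_apply, Fin.ext_iff]
  grind

lemma mulVec_apply_l_add_one : (B[N, l] *ᵥ x) ⟨l + 1, by omega⟩ = -x ⟨l, by omega⟩ := by
  rw [mulVec_apply_of_row_eq (r := Pi.single ⟨l, by omega⟩ (-1)), single_dotProduct]
  · ring
  intro j
  simp only [Bmat, Bent, of_apply, Pi.single_apply, Fin.ext_iff]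
  grind

lemma mulVec_apply_of_l_add_two_le {i : ℕ} (h : l + 2 ≤ i) (hi : i < 2 * l + 2) :
    (B[N, l] *ᵥ x) ⟨i, by omega⟩ = x ⟨i, hi⟩ := by
  rw [mulVec_apply_of_row_eq (r := Pi.single ⟨i, hi⟩ 1), single_dotProduct, one_mul]
  intro j
  simp only [Bmat, Bent, of_apply, Pi.single_apply, Fin.ext_iff]
  grind

lemma mulVec_apply_two_mul_add_two :
    (B[N, l] *ᵥ x) ⟨2 * l + 2, by simp⟩ = x ⟨1, by omega⟩ := by
  rw [mulVec_apply_of_row_eq (r := Pi.single ⟨1, by omega⟩ 1), single_dotProduct, one_mul]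
  intro j
  simp only [Bmat, Bent, of_apply, Pi.single_apply, Fin.ext_iff]
  grind

lemma mulVec_apply_two_mul_add_three :
    (B[N, l] *ᵥ x) ⟨2 * l + 3, by simp⟩ = x ⟨0, by omega⟩ := by
  rw [mulVec_apply_of_row_eq (r := Pi.single ⟨0, by omega⟩ 1), single_dotProduct, one_mul]
  intro j
  simp only [Bmat, Bent, of_apply, Pi.single_apply, Fin.ext_iff]
  grind

lemma mulVec_one_sub_add_eq_zero (hl : 1 ≤ l) :
    (B[N, l] *ᵥ x) ⟨1, by omega⟩ - (B[N, l] *ᵥ x) ⟨2 * l + 2, by simp⟩ +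
      (B[N, l] *ᵥ x) ⟨2 * l + 3, by simp⟩ = 0 := by
  rw [mulVec_apply_add_one_of_lt x (i := 0) hl, mulVec_apply_two_mul_add_two,
    mulVec_apply_two_mul_add_three]
  ring

end Bmat

def blockPartialSum (l : ℕ) (z : Fin (2 * l + 4) → ℤ) (n : ℕ) : ℤ :=
  z ⟨2 * l + 3, by simp⟩ + ∑ k ∈ range n, natExtend z (k + 1)

section blockPartialSum

variable {l : ℕ} (z : Fin (2 * l + 4) → ℤ)

lemma blockPartialSum_zero : blockPartialSum l z 0 = z ⟨2 * l + 3, by simp⟩ := by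
  rw [blockPartialSum, sum_range_zero, add_zero]

lemma blockPartialSum_succ {n : ℕ} (hn : n + 1 < 2 * l + 4) :
    blockPartialSum l z (n + 1) = blockPartialSum l z n + z ⟨n + 1, hn⟩ := by
  rw [blockPartialSum, sum_range_succ, natExtend_of_lt z hn, ← add_assoc, blockPartialSum]

lemma blockPartialSum_one :
    blockPartialSum l z 1 = z ⟨2 * l + 3, by simp⟩ + z ⟨1, by omega⟩ := by
  rw [blockPartialSum_succ z (n := 0) (by omega), blockPartialSum_zero]

lemma blockPartialSum_l_add_one :
    blockPartialSum l z (l + 1) =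
      (z ⟨1, by omega⟩ - z ⟨2 * l + 2, by simp⟩ + z ⟨2 * l + 3, by simp⟩) +
        ((∑ k : Fin l, z ⟨k.1 + 2, by omega⟩) + z ⟨2 * l + 2, by simp⟩) := by
  have hsum : ∑ k : Fin l, z ⟨k.1 + 2, by omega⟩ = ∑ k ∈ range l, natExtend z (k + 2) := by
    rw [← Fin.sum_univ_eq_sum_range]
    exact sum_congr rfl fun k _ => (natExtend_of_lt z _).symm
  rw [hsum, blockPartialSum, sum_range_succ', natExtend_of_lt z (by omega)]
  ring

end blockPartialSum

namespace Bmat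

variable {N l : ℕ}

lemma blockPartialSum_mulVec (x : Fin (2 * l + 2) → ℤ) {n : ℕ} (hn : n ≤ l) :
    blockPartialSum l (B[N, l] *ᵥ x) n = x ⟨n, by omega⟩ := by
  induction n with
  | zero => rw [blockPartialSum_zero, mulVec_apply_two_mul_add_three]
  | succ n ih =>
    rw [blockPartialSum_succ _ (by omega), ih (by omega), mulVec_apply_add_one_of_lt x hn]
    ring

lemma blockPartialSum_mulVec_l_add_one (x : Fin (2 * l + 2) → ℤ) :
    blockPartialSum l (B[N, l] *ᵥ x) (l + 1) = 0 := by
  rw [blockPartialSum_succ _ (by omega), blockPartialSum_mulVec x le_rfl,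
    mulVec_apply_l_add_one, add_neg_cancel]

-- `c` plays the role of `z_0 / N`.
def preimage (l : ℕ) (z : Fin (2 * l + 4) → ℤ) (c : ℤ) (i : Fin (2 * l + 2)) : ℤ :=
  if i.1 ≤ l then blockPartialSum l z i
  else if i.1 = l + 1 then c
  else z ⟨i, by omega⟩

section preimage

variable (z : Fin (2 * l + 4) → ℤ) (c : ℤ)

lemma preimage_of_le {i : ℕ} (h : i ≤ l) :
    preimage l z c ⟨i, by omega⟩ = blockPartialSum l z i :=
  if_pos h

lemma preimage_l_add_one : preimage l z c ⟨l + 1, by omega⟩ = c := by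
  rw [preimage, if_neg (by simp), if_pos rfl]

lemma preimage_of_l_add_two_le {i : ℕ} (h : l + 2 ≤ i) (hi : i < 2 * l + 2) :
    preimage l z c ⟨i, hi⟩ = z ⟨i, by omega⟩ := by
  rw [preimage, if_neg (by simp; omega), if_neg (by simp; omega)]

end preimage

lemma mulVec_preimage (hl : 1 ≤ l) {z : Fin (2 * l + 4) → ℤ} {c : ℤ}
    (hc : z ⟨0, by omega⟩ = N * c)
    (h₂ : z ⟨1, by omega⟩ - z ⟨2 * l + 2, by simp⟩ + z ⟨2 * l + 3, by simp⟩ = 0)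
    (hp : blockPartialSum l z (l + 1) = 0) :
    B[N, l] *ᵥ preimage l z c = z := by
  funext ⟨i, hi⟩
  obtain rfl | ⟨j, hj, rfl⟩ | rfl | ⟨hi₁, hi₂⟩ | rfl | rfl :
      i = 0 ∨ (∃ j < l, i = j + 1) ∨ i = l + 1 ∨ (l + 2 ≤ i ∧ i < 2 * l + 2) ∨
        i = 2 * l + 2 ∨ i = 2 * l + 3 := by
    rcases Nat.lt_or_ge l i with h | h
    · omega
    · rcases i with _ | j
      · exact Or.inl rfl
      · exact Or.inr (Or.inl ⟨j, h, rfl⟩)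
  · rw [mulVec_apply_zero, preimage_l_add_one, hc]
  · rw [mulVec_apply_add_one_of_lt _ hj, preimage_of_le _ _ hj, preimage_of_le _ _ hj.le,
      blockPartialSum_succ z hi, add_sub_cancel_left]
  · rw [blockPartialSum_succ z hi] at hp
    rw [mulVec_apply_l_add_one, preimage_of_le _ _ le_rfl]
    linarith
  · rw [mulVec_apply_of_l_add_two_le _ hi₁ hi₂, preimage_of_l_add_two_le _ _ hi₁ hi₂]
  · rw [mulVec_apply_two_mul_add_two, preimage_of_le _ _ hl, blockPartialSum_one]
    linarith
  · rw [mulVec_apply_two_mul_add_three, preimage_of_le _ _ (Nat.zero_le l), blockPartialSum_zero]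

end Bmat

/-- Lemma 5.5: `z` lies in `B_{l,l+1} ℤ^{2l+2}` iff `N ∣ z₁`,
`z₂ - z_{2l+3} + z_{2l+4} = 0` and `z₃ + ⋯ + z_{l+2} + z_{2l+3} = 0`. -/
theorem stmt7 (N l : ℕ) (hl : 2 ≤ l) (z : Fin (2 * l + 4) → ℤ) :
    (∃ x : Fin (2 * l + 2) → ℤ, z = (Bmat N l (2 * l + 4) (2 * l + 2)).mulVec x) ↔
      ((N : ℤ) ∣ z ⟨0, by omega⟩ ∧
        z ⟨1, by omega⟩ - z ⟨2 * l + 2, by omega⟩ + z ⟨2 * l + 3, by omega⟩ = 0 ∧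
        (∑ k : Fin l, z ⟨k.1 + 2, by have := k.isLt; omega⟩) + z ⟨2 * l + 2, by omega⟩ = 0) := by
  have hl₁ : 1 ≤ l := by omega
  have hsplit := blockPartialSum_l_add_one z
  constructor
  · rintro ⟨x, rfl⟩
    have h₂ := Bmat.mulVec_one_sub_add_eq_zero (N := N) x hl₁
    have hp := Bmat.blockPartialSum_mulVec_l_add_one (N := N) x
    exact ⟨⟨_, Bmat.mulVec_apply_zero x⟩, h₂, by linarith⟩
  · rintro ⟨⟨c, hc⟩, h₂, h₃⟩
    exact ⟨Bmat.preimage l z c, (Bmat.mulVec_preimage hl₁ hc h₂ (by linarith)).symm⟩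
end

section
/- The direct limit of the system of abelian groups G_l = ℤ/Nℤ ⊕ ℤ ⊕ ℤ with identical connecting homomorphisms L : G_l → G_{l+1} given by the matrix L = [[1,0,0],[0,0,0],[0,1,1]] (i.e., L(g, m, k) = (g, 0, m + k)) is isomorphic to ℤ/Nℤ ⊕ ℤ. -/
open CategoryTheory Limits

/-- The connecting homomorphism `L : ℤ/Nℤ ⊕ ℤ ⊕ ℤ → ℤ/Nℤ ⊕ ℤ ⊕ ℤ`,
`(g, m, k) ↦ (g, 0, m + k)`, given by the matrix `[[1,0,0],[0,0,0],[0,1,1]]`. -/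
def Lmap (N : ℕ) : (ZMod N × ℤ × ℤ) →+ (ZMod N × ℤ × ℤ) :=
  AddMonoidHom.mk' (fun p => (p.1, 0, p.2.1 + p.2.2)) (by
    intro a b
    refine Prod.ext ?_ (Prod.ext ?_ ?_) <;> simp <;> ring)

/-!
`L` is a split idempotent: it factors as `ℤ/N ⊕ ℤ ⊕ ℤ → ℤ/N ⊕ ℤ → ℤ/N ⊕ ℤ ⊕ ℤ`,
`(g, m, k) ↦ (g, m + k) ↦ (g, 0, m + k)`, and the composite the other way round is the identity.
Along a sequence whose connecting maps are all one idempotent `e`, every cocone leg is fixed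
by `e` and the legs are all equal, so the colimit is the object through which `e` splits.
-/

namespace CategoryTheory.Limits

universe v u

variable {C : Type u} [Category.{v} C]

lemma Cocone.map_succ_ι_app {X : ℕ → C} {f : (n : ℕ) → X n ⟶ X (n + 1)}
    (s : Cocone (Functor.ofSequence f)) (n : ℕ) :
    f n ≫ s.ι.app (n + 1) = s.ι.app n := by
  have := s.w (homOfLE (n.le_add_right 1))
  rwa [Functor.ofSequence_map_homOfLE_succ] at this

section Idempotent

variable {X : C} {e : X ⟶ X} (s : Cocone (Functor.ofSequence fun _ : ℕ => e))

lemma Cocone.idem_comp_ι_app (he : e ≫ e = e) (n : ℕ) :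
    e ≫ s.ι.app n = s.ι.app n :=
  -- term mode: `s.ι.app n` has source `(ofSequence _).obj n`, only defeq to `X`, which defeats `rw`
  have hsucc := s.map_succ_ι_app n
  (congrArg (e ≫ ·) hsucc.symm).trans ((reassoc_of% he) _ |>.trans hsucc)

lemma Cocone.ι_app_eq_ι_app_zero (he : e ≫ e = e) (n : ℕ) : s.ι.app n = s.ι.app 0 := by
  induction n with
  | zero => rfl
  | succ n ih => exact ((s.idem_comp_ι_app he _).symm.trans (s.map_succ_ι_app n)).trans ih

end Idempotent

variable {X Y : C} (p : X ⟶ Y) (i : Y ⟶ X)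

def splitIdempotentSequenceCocone (h : i ≫ p = 𝟙 Y) :
    Cocone (Functor.ofSequence fun _ : ℕ => p ≫ i) where
  pt := Y
  ι := NatTrans.ofSequence (fun _ => p) fun _ => by
    simp only [Functor.ofSequence_map_homOfLE_succ, Functor.const_obj_map]
    exact (Category.assoc p i p).trans (congrArg (p ≫ ·) h)

def isColimitSplitIdempotentSequenceCocone (h : i ≫ p = 𝟙 Y) :
    IsColimit (splitIdempotentSequenceCocone p i h) where
  desc s := i ≫ s.ι.app 0
  fac s n := by
    have he : (p ≫ i) ≫ p ≫ i = p ≫ i := by simp [reassoc_of% h]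
    exact (Category.assoc _ _ _).symm.trans
      ((s.idem_comp_ι_app he 0).trans (s.ι_app_eq_ι_app_zero he n).symm)
  uniq s m hm := by
    rw [← hm 0]
    exact ((reassoc_of% h) m).symm

end CategoryTheory.Limits

section

variable (N : ℕ)

def foldSum : (ZMod N × ℤ × ℤ) →+ (ZMod N × ℤ) :=
  (AddMonoidHom.id (ZMod N)).prodMap ((AddMonoidHom.id ℤ).coprod (AddMonoidHom.id ℤ))

def inclSnd : (ZMod N × ℤ) →+ (ZMod N × ℤ × ℤ) :=
  (AddMonoidHom.id (ZMod N)).prodMap (AddMonoidHom.inr ℤ ℤ)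

lemma inclSnd_comp_foldSum : (foldSum N).comp (inclSnd N) = AddMonoidHom.id _ := by
  ext <;> simp [foldSum, inclSnd]

lemma Lmap_eq_comp : Lmap N = (inclSnd N).comp (foldSum N) := by
  ext <;> simp [Lmap, foldSum, inclSnd]

end

theorem stmt10_general (N : ℕ) :
    Nonempty
      (colimit (Functor.ofSequence
          (X := fun _ : ℕ => AddCommGrpCat.of (ZMod N × ℤ × ℤ))
          (fun _ => AddCommGrpCat.ofHom (Lmap N))) ≅
        AddCommGrpCat.of (ZMod N × ℤ)) := by
  have hL : AddCommGrpCat.ofHom (Lmap N) =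
      AddCommGrpCat.ofHom (foldSum N) ≫ AddCommGrpCat.ofHom (inclSnd N) := by
    rw [Lmap_eq_comp, AddCommGrpCat.ofHom_comp]
  have hsplit : AddCommGrpCat.ofHom (inclSnd N) ≫ AddCommGrpCat.ofHom (foldSum N) = 𝟙 _ := by
    rw [← AddCommGrpCat.ofHom_comp, inclSnd_comp_foldSum, AddCommGrpCat.ofHom_id]
  simp only [hL]
  exact ⟨colimit.isoColimitCocone ⟨_, isColimitSplitIdempotentSequenceCocone _ _ hsplit⟩⟩

/-- The direct limit of the constant sequence `G_l = ℤ/Nℤ ⊕ ℤ ⊕ ℤ` with connecting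
homomorphisms `L` is isomorphic to `ℤ/Nℤ ⊕ ℤ`. -/
theorem stmt10 (N : ℕ) (hN : 0 < N) :
    Nonempty
      (colimit (Functor.ofSequence
          (X := fun _ : ℕ => AddCommGrpCat.of (ZMod N × ℤ × ℤ))
          (fun _ => AddCommGrpCat.ofHom (Lmap N))) ≅
        AddCommGrpCat.of (ZMod N × ℤ)) :=
  stmt10_general N
end

section
/- For l ≥ 2, let P_{l+1} be the (2l+4) × (2l+4) lower-triangular integer matrix with P(i,i) = 1 for all i, P(i,1) = -1 for 2 ≤ i ≤ l+2, and 0 elsewhere. Then P_{l+1} is invertible over ℤ (determinant 1), and P_{l+1} (M^t_{l,l+1} - I^t_{l,l+1}) ℤ^{2l+2} = B_{l,l+1} ℤ^{2l+2}, so that P_{l+1} induces a group isomorphism ℤ^{2l+4}/(M^t_{l,l+1} - I^t_{l,l+1})ℤ^{2l+2} ≅ ℤ^{2l+4}/B_{l,l+1}ℤ^{2l+2}. -/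
/-- The entry in row `i`, column `j` (1-based) of the `(2l+4) × (2l+4)` lower-triangular
matrix `P_{l+1}`: `P(i,i) = 1`, `P(i,1) = -1` for `2 ≤ i ≤ l+2`, and `0` elsewhere. -/
def Pent (l : ℕ) (i j : ℕ) : ℤ :=
  if i = j then 1
  else if j = 1 ∧ 2 ≤ i ∧ i ≤ l + 2 then -1
  else 0

/-- The matrix `P_{l+1}`, of size `m × m`. -/
def Pmat (l m : ℕ) : Matrix (Fin m) (Fin m) ℤ :=
  Matrix.of fun i j => Pent l (i.1 + 1) (j.1 + 1)

/-- Auxiliary change of basis on the source: a lower unitriangular matrix `Q`. -/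
def Qent (l : ℕ) (k j : ℕ) : ℤ :=
  if k = j then 1
  else if k + j = 2 * l + 5 ∧ 3 ≤ j ∧ j ≤ l + 1 then 1
  else if k = j + 1 ∧ l + 2 ≤ j ∧ j ≤ 2 * l + 1 then -1
  else 0

def Qmat (l n : ℕ) : Matrix (Fin n) (Fin n) ℤ :=
  Matrix.of fun k j => Qent l (k.1 + 1) (j.1 + 1)

lemma sum_two {n : ℕ} (f : Fin n → ℤ) (a b : Fin n) (hab : a ≠ b)
    (h : ∀ k, k ≠ a → k ≠ b → f k = 0) : ∑ k, f k = f a + f b := by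
  rw [← Finset.sum_pair hab]
  refine (Finset.sum_subset (Finset.subset_univ _) ?_).symm
  intro k _ hk
  simp only [Finset.mem_insert, Finset.mem_singleton, not_or] at hk
  exact h k hk.1 hk.2

lemma sum_one {n : ℕ} (f : Fin n → ℤ) (a : Fin n)
    (h : ∀ k, k ≠ a → f k = 0) : ∑ k, f k = f a :=
  Finset.sum_eq_single_of_mem a (Finset.mem_univ a) (fun k _ hk => h k hk)


lemma Pent_eq_one (l a b : ℕ) (h : a = b) : Pent l a b = 1 := by
  unfold Pent; split_ifs <;> omega

lemma Pent_eq_neg_one (l a b : ℕ) (h : b = 1 ∧ 2 ≤ a ∧ a ≤ l + 2 ∧ a ≠ b) :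
    Pent l a b = -1 := by
  unfold Pent; split_ifs <;> omega

lemma Pent_eq_zero (l a b : ℕ) (h1 : a ≠ b) (h2 : ¬(b = 1 ∧ 2 ≤ a ∧ a ≤ l + 2)) :
    Pent l a b = 0 := by
  unfold Pent; split_ifs <;> omega

lemma Qent_diag (l a b : ℕ) (h : a = b) : Qent l a b = 1 := by
  unfold Qent; split_ifs <;> omega

lemma Qent_anti (l a b : ℕ) (h : a + b = 2*l+5 ∧ 3 ≤ b ∧ b ≤ l+1) (hne : a ≠ b) :
    Qent l a b = 1 := by
  unfold Qent; split_ifs <;> omega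

lemma Qent_sub (l a b : ℕ) (h : a = b + 1 ∧ l + 2 ≤ b ∧ b ≤ 2*l+1) (hne : a ≠ b) :
    Qent l a b = -1 := by
  unfold Qent; split_ifs <;> omega

lemma extra0 (N l i j : ℕ) :
    (if 1 ≤ i ∧ i ≤ l+1 then MmIent N l 1 (j+1) else 0)
    = if (1 ≤ i ∧ i ≤ l+1) ∧ j+1 = l+2 then (N:ℤ) else 0 := by
  simp only [MmIent]; split_ifs <;> omega

lemma extra1 (N l i j : ℕ) :
    (if 2 ≤ j ∧ j ≤ l then Bent N l (i+1) (2*l+4-j) else 0)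
    = if (2 ≤ j ∧ j ≤ l) ∧ i+1 = 2*l+4-j then 1 else 0 := by
  simp only [Bent]; split_ifs <;> omega

lemma extra2 (N l i j : ℕ) :
    (if l+1 ≤ j ∧ j ≤ 2*l then Bent N l (i+1) (j+2) else 0)
    = if (l+1 ≤ j ∧ j ≤ 2*l) ∧ i+1 = j+2 then 1 else 0 := by
  simp only [Bent]; split_ifs <;> omega

set_option maxHeartbeats 1600000 in
lemma key (N l : ℕ) (hl : 2 ≤ l) (i j : ℕ) (hi : i < 2*l+4) (hj : j < 2*l+2) :
    MmIent N l (i+1) (j+1) - (if 1 ≤ i ∧ i ≤ l+1 then MmIent N l 1 (j+1) else 0)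
    = Bent N l (i+1) (j+1)
      + (if 2 ≤ j ∧ j ≤ l then Bent N l (i+1) (2*l+4-j) else 0)
      - (if l+1 ≤ j ∧ j ≤ 2*l then Bent N l (i+1) (j+2) else 0) := by
  rw [extra0, extra1, extra2]
  simp only [MmIent, Bent]
  split_ifs <;> omega

lemma PM_entry (N l : ℕ) (i : Fin (2*l+4)) (j : Fin (2*l+2)) :
    (Pmat l (2*l+4) * MmI N l (2*l+4) (2*l+2)) i j
      = MmIent N l (i.1+1) (j.1+1)
        - (if 1 ≤ i.1 ∧ i.1 ≤ l+1 then MmIent N l 1 (j.1+1) else 0) := by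
  rw [Matrix.mul_apply]
  rcases eq_or_ne i ⟨0, by omega⟩ with hi | hi
  · rw [sum_one _ ⟨0, by omega⟩ ?_]
    · subst hi
      simp only [Pmat, MmI, Matrix.of_apply]
      rw [Pent_eq_one _ _ _ rfl, one_mul, if_neg (by omega)]
      ring
    · intro k hk
      have hk' : k.1 ≠ 0 := fun h => hk (Fin.ext h)
      subst hi
      simp only [Pmat, MmI, Matrix.of_apply]
      rw [Pent_eq_zero _ _ _ (by omega) (by omega), zero_mul]
  · have hi' : i.1 ≠ 0 := fun h => hi (Fin.ext h)
    rw [sum_two _ ⟨0, by omega⟩ i (by exact fun h => hi h.symm) ?_]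
    · simp only [Pmat, MmI, Matrix.of_apply]
      rw [Pent_eq_one _ (i.1+1) (i.1+1) rfl, one_mul]
      by_cases hc : 1 ≤ i.1 ∧ i.1 ≤ l + 1
      · rw [Pent_eq_neg_one _ _ _ (by omega), if_pos hc, neg_one_mul]; ring
      · rw [Pent_eq_zero _ _ _ (by omega) (by omega), if_neg hc, zero_mul]; ring
    · intro k hk0 hki
      have hk0' : k.1 ≠ 0 := fun h => hk0 (Fin.ext h)
      have hki' : k.1 ≠ i.1 := fun h => hki (Fin.ext h)
      simp only [Pmat, MmI, Matrix.of_apply]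
      rw [Pent_eq_zero _ _ _ (by omega) (by omega), zero_mul]

lemma Qent_eq_zero (l k j : ℕ) (h1 : k ≠ j) (h2 : ¬(k + j = 2*l+5 ∧ 3 ≤ j ∧ j ≤ l+1))
    (h3 : ¬(k = j + 1 ∧ l + 2 ≤ j ∧ j ≤ 2*l+1)) : Qent l k j = 0 := by
  simp only [Qent]; split_ifs <;> omega

lemma BQ_entry (N l : ℕ) (hl : 2 ≤ l) (i : Fin (2*l+4)) (j : Fin (2*l+2)) :
    (Bmat N l (2*l+4) (2*l+2) * Qmat l (2*l+2)) i j
      = Bent N l (i.1+1) (j.1+1)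
        + (if 2 ≤ j.1 ∧ j.1 ≤ l then Bent N l (i.1+1) (2*l+4-j.1) else 0)
        - (if l+1 ≤ j.1 ∧ j.1 ≤ 2*l then Bent N l (i.1+1) (j.1+2) else 0) := by
  rw [Matrix.mul_apply]
  by_cases hA : 2 ≤ j.1 ∧ j.1 ≤ l
  · rw [sum_two _ j ⟨2*l+3-j.1, by omega⟩ (by
        intro h; have := congrArg Fin.val h; simp at this; omega) ?_]
    · simp only [Bmat, Qmat, Matrix.of_apply]
      rw [Qent_diag _ _ _ rfl, mul_one]
      rw [Qent_anti _ _ _ (by omega) (by omega), mul_one]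
      rw [if_pos hA, if_neg (by omega)]
      rw [show 2*l+3-j.1+1 = 2*l+4-j.1 from by omega]
      ring
    · intro k hkj hke
      have hkj' : k.1 ≠ j.1 := fun h => hkj (Fin.ext h)
      have hke' : k.1 ≠ 2*l+3-j.1 := fun h => hke (Fin.ext h)
      simp only [Bmat, Qmat, Matrix.of_apply]
      rw [Qent_eq_zero l _ _ (by omega) (by omega) (by omega), mul_zero]
  · by_cases hB : l+1 ≤ j.1 ∧ j.1 ≤ 2*l
    · rw [sum_two _ j ⟨j.1+1, by omega⟩ (by
          intro h; have := congrArg Fin.val h; simp at this) ?_]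
      · simp only [Bmat, Qmat, Matrix.of_apply]
        rw [Qent_diag _ _ _ rfl, mul_one]
        rw [Qent_sub _ _ _ (by omega) (by omega)]
        rw [if_neg hA, if_pos hB]
        ring
      · intro k hkj hke
        have hkj' : k.1 ≠ j.1 := fun h => hkj (Fin.ext h)
        have hke' : k.1 ≠ j.1+1 := fun h => hke (Fin.ext h)
        simp only [Bmat, Qmat, Matrix.of_apply]
        rw [Qent_eq_zero l _ _ (by omega) (by omega) (by omega), mul_zero]
    · rw [sum_one _ j ?_]
      · simp only [Bmat, Qmat, Matrix.of_apply]
        rw [Qent_diag _ _ _ rfl, mul_one]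
        rw [if_neg hA, if_neg hB]
        ring
      · intro k hkj
        have hkj' : k.1 ≠ j.1 := fun h => hkj (Fin.ext h)
        simp only [Bmat, Qmat, Matrix.of_apply]
        rw [Qent_eq_zero l _ _ (by omega) (by omega) (by omega), mul_zero]

lemma PMeqBQ (N l : ℕ) (hl : 2 ≤ l) :
    Pmat l (2*l+4) * MmI N l (2*l+4) (2*l+2)
      = Bmat N l (2*l+4) (2*l+2) * Qmat l (2*l+2) := by
  ext i j
  rw [PM_entry, BQ_entry N l hl]
  exact key N l hl i.1 j.1 i.2 j.2

lemma detP (l : ℕ) : (Pmat l (2*l+4)).det = 1 := by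
  rw [Matrix.det_of_lowerTriangular _ ?_]
  · apply Finset.prod_eq_one
    intro i _
    simp [Pmat, Pent]
  · intro i j h
    have h2 : i < j := by simpa using h
    have h3 : i.1 < j.1 := h2
    simp only [Pmat, Matrix.of_apply]
    exact Pent_eq_zero _ _ _ (by omega) (by omega)

lemma detQ (l : ℕ) : (Qmat l (2*l+2)).det = 1 := by
  rw [Matrix.det_of_lowerTriangular _ ?_]
  · apply Finset.prod_eq_one
    intro i _
    simp [Qmat, Qent]
  · intro i j h
    have h2 : i < j := by simpa using h
    have h3 : i.1 < j.1 := h2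
    show Qent l (i.1+1) (j.1+1) = 0
    exact Qent_eq_zero l _ _ (by omega) (by omega) (by omega)

/-- `P_{l+1}` is invertible over `ℤ` with determinant `1`, it carries the image of
`M^t_{l,l+1} - I^t_{l,l+1}` onto the image of `B_{l,l+1}`, and hence induces an
isomorphism of the corresponding cokernels. -/
theorem stmt14 (N l : ℕ) (hN : 0 < N) (hl : 2 ≤ l) :
    (Pmat l (2 * l + 4)).det = 1 ∧
    IsUnit (Pmat l (2 * l + 4)) ∧
    LinearMap.range ((Pmat l (2 * l + 4)).mulVecLin.comp
        (MmI N l (2 * l + 4) (2 * l + 2)).mulVecLin) =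
      LinearMap.range (Bmat N l (2 * l + 4) (2 * l + 2)).mulVecLin ∧
    Nonempty
      (((Fin (2 * l + 4) → ℤ) ⧸
          LinearMap.range (MmI N l (2 * l + 4) (2 * l + 2)).mulVecLin) ≃+
        ((Fin (2 * l + 4) → ℤ) ⧸
          LinearMap.range (Bmat N l (2 * l + 4) (2 * l + 2)).mulVecLin)) := by
  have hP : IsUnit (Pmat l (2 * l + 4)) :=
    (Matrix.isUnit_iff_isUnit_det _).mpr (by rw [detP]; exact isUnit_one)
  have hQdet : IsUnit (Qmat l (2*l+2)).det := by rw [detQ]; exact isUnit_one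
  have hQtop : LinearMap.range (Qmat l (2*l+2)).mulVecLin = ⊤ := by
    rw [LinearMap.range_eq_top]
    intro v
    refine ⟨(Qmat l (2*l+2))⁻¹.mulVec v, ?_⟩
    rw [Matrix.mulVecLin_apply, Matrix.mulVec_mulVec, Matrix.mul_nonsing_inv _ hQdet,
      Matrix.one_mulVec]
  have hrange : LinearMap.range ((Pmat l (2 * l + 4)).mulVecLin.comp
        (MmI N l (2 * l + 4) (2 * l + 2)).mulVecLin) =
      LinearMap.range (Bmat N l (2 * l + 4) (2 * l + 2)).mulVecLin := by
    rw [← Matrix.mulVecLin_mul, PMeqBQ N l hl, Matrix.mulVecLin_mul,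
      LinearMap.range_comp, hQtop, Submodule.map_top]
  refine ⟨detP l, hP, hrange, ?_⟩
  have hinv : Invertible (Pmat l (2*l+4)) :=
    Matrix.invertibleOfIsUnitDet _ (by rw [detP]; exact isUnit_one)
  set e := (Pmat l (2*l+4)).toLinearEquiv' hinv with he
  have hecoe : (e : (Fin (2*l+4) → ℤ) →ₗ[ℤ] (Fin (2*l+4) → ℤ))
      = (Pmat l (2*l+4)).mulVecLin := by
    rw [he, Matrix.toLinearEquiv'_apply, Matrix.toLin'_apply']
  refine ⟨(Submodule.Quotient.equiv _ _ e ?_).toAddEquiv⟩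
  show Submodule.map (e : (Fin (2*l+4) → ℤ) →ₗ[ℤ] (Fin (2*l+4) → ℤ)) _ = _
  rw [hecoe, ← LinearMap.range_comp]
  exact hrange
end
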